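/- arXiv:2003.08699 — 3 statements merged into one kernel-verified Lean document; each statement's English description precedes it below -/
import Mathlib

section
/- Let n ≥ 2, α ≥ 0, β > 0, γ ∈ ℝ, and let f = (f¹,…,fⁿ) : [0,∞) → ℝⁿ be a continuous function with 0 ≤ f¹_t ≤ … ≤ fⁿ_t for all t ≥ 0 and such that 0 ≤ f¹_t < f²_t < … < fⁿ_t for Lebesgue-almost every t ≥ 0. Then for every t ≥ 0 the following equivalence holds: ∑_{i=1}^{n-1} ∫₀ᵗ f^{i+1}_s / (f^{i+1}_s − f^i_s) ds < ∞ if and only if ∑_{i=1}^{n} ∫₀ᵗ | α − 2γ f^i_s + β ∑_{j≠i} (f^i_s + f^j_s)/(f^i_s − f^j_s) | ds < ∞ (with the convention that the quotient f^i_s/(f^j_s − f^i_s) equals +∞ when f^j_s = f^i_s, this is harmless since equality only holds on a Lebesgue-null set of times). -/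
/-!
For a strictly ordered nonnegative configuration `x₀ < ⋯ < xₘ`, an interaction term
`(xᵢ + xⱼ) / (xᵢ - xⱼ)` with `j < i` is at most `2 xᵢ / (xᵢ - xᵢ₋₁)`, so every drift is bounded
by a constant plus a multiple of the sum of the consecutive ratios `xₖ₊₁ / (xₖ₊₁ - xₖ)`.
Conversely, summing the interactions of all particles above the `k`-th gap, the pairs on the same
side cancel by antisymmetry and the terms across the gap are nonnegative, so the `k`-th ratio is
bounded by the total absolute drift plus a multiple of `max |xᵢ|`. Along the trajectory the
coordinates are bounded on `[0, t]`, so these pointwise bounds integrate to the equivalence.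
-/

open MeasureTheory Finset

theorem sum_sum_eq_zero_of_antisymm {ι R : Type*} [NonAssocRing R] [NoZeroDivisors R]
    [CharZero R] (s : Finset ι) {r : ι → ι → R} (hr : ∀ i j, r j i = -r i j) :
    ∑ i ∈ s, ∑ j ∈ s, r i j = 0 := by
  refine CharZero.eq_neg_self_iff.1 ?_
  conv_lhs => rw [sum_comm]
  rw [← sum_neg_distrib]
  refine sum_congr rfl fun i _ => ?_
  rw [← sum_neg_distrib]
  exact sum_congr rfl fun j _ => hr i j

theorem lintegral_ofReal_lt_top_of_ae_le_add_mul_sum {X ι : Type*} [MeasurableSpace X]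
    {μ : Measure X} [IsFiniteMeasure μ] {F : X → ℝ} {G : ι → X → ℝ} {s : Finset ι} {a b : ℝ}
    (hb : 0 ≤ b) (hG : ∀ k ∈ s, AEMeasurable (G k) μ)
    (hle : ∀ᵐ x ∂μ, F x ≤ a + b * ∑ k ∈ s, G k x)
    (hfin : ∑ k ∈ s, ∫⁻ x, ENNReal.ofReal (G k x) ∂μ < ⊤) :
    ∫⁻ x, ENNReal.ofReal (F x) ∂μ < ⊤ := by
  have hle' : ∀ᵐ x ∂μ, ENNReal.ofReal (F x)
      ≤ ENNReal.ofReal a + ENNReal.ofReal b * ∑ k ∈ s, ENNReal.ofReal (G k x) := by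
    filter_upwards [hle] with x hx
    calc ENNReal.ofReal (F x) ≤ ENNReal.ofReal a + ENNReal.ofReal (b * ∑ k ∈ s, G k x) :=
          (ENNReal.ofReal_le_ofReal hx).trans ENNReal.ofReal_add_le
      _ ≤ _ := by
          rw [ENNReal.ofReal_mul hb]
          gcongr
          exact le_sum_of_subadditive _ ENNReal.ofReal_zero.le
            (fun _ _ => ENNReal.ofReal_add_le) _ _
  refine (lintegral_mono_ae hle').trans_lt ?_
  rw [lintegral_add_left measurable_const, lintegral_const,
    lintegral_const_mul' _ _ ENNReal.ofReal_ne_top,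
    lintegral_finsetSum' _ fun k hk => (hG k hk).ennreal_ofReal]
  exact ENNReal.add_lt_top.2 ⟨ENNReal.mul_lt_top ENNReal.ofReal_lt_top (measure_lt_top μ _),
    ENNReal.mul_lt_top ENNReal.ofReal_lt_top hfin⟩

noncomputable section EigenvalueDrift

variable {n m : ℕ}

def gapRatio (x : Fin (m + 1) → ℝ) (k : Fin m) : ℝ :=
  x k.succ / (x k.succ - x k.castSucc)

def pairRatio (x : Fin n → ℝ) (i j : Fin n) : ℝ :=
  (x i + x j) / (x i - x j)

def interaction (x : Fin n → ℝ) (i : Fin n) : ℝ :=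
  ∑ j ∈ univ.erase i, pairRatio x i j

def drift (α β γ : ℝ) (x : Fin n → ℝ) (i : Fin n) : ℝ :=
  α - 2 * γ * x i + β * interaction x i

theorem pairRatio_swap (x : Fin n → ℝ) (i j : Fin n) : pairRatio x j i = -pairRatio x i j := by
  rw [pairRatio, pairRatio, ← neg_sub, div_neg, add_comm]

-- Division by zero makes the diagonal term vanish, so the sum may run over all `j`.
theorem interaction_eq_sum (x : Fin n → ℝ) (i : Fin n) :
    interaction x i = ∑ j, pairRatio x i j := by
  rw [interaction, sum_erase]
  simp [pairRatio]

theorem measurable_gapRatio (k : Fin m) : Measurable fun x : Fin (m + 1) → ℝ => gapRatio x k := by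
  unfold gapRatio; fun_prop

theorem measurable_drift (α β γ : ℝ) (i : Fin n) :
    Measurable fun x : Fin n → ℝ => drift α β γ x i := by
  unfold drift interaction pairRatio; fun_prop

variable {x : Fin (m + 1) → ℝ}

theorem abs_drift_sub_le {C : ℝ} (hC : ∀ i, |x i| ≤ C) (α β γ : ℝ) (i : Fin (m + 1)) :
    |drift α β γ x i - β * interaction x i| ≤ |α| + 2 * |γ| * C := by
  rw [drift, add_sub_cancel_right]
  calc |α - 2 * γ * x i| ≤ |α| + |2 * γ * x i| := abs_sub _ _
    _ = |α| + 2 * |γ| * |x i| := by rw [abs_mul, abs_mul, abs_two]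
    _ ≤ |α| + 2 * |γ| * C := by gcongr; exact hC i

variable (h0 : 0 ≤ x 0) (hx : StrictMono x)
include h0 hx

theorem gapRatio_nonneg (k : Fin m) : 0 ≤ gapRatio x k :=
  div_nonneg (h0.trans (hx.monotone (Fin.zero_le _)))
    (sub_nonneg.2 (hx.monotone k.castSucc_lt_succ.le))

theorem pairRatio_nonneg {i j : Fin (m + 1)} (hji : j < i) : 0 ≤ pairRatio x i j := by
  have := h0.trans (hx.monotone (Fin.zero_le j))
  exact div_nonneg (by linarith [hx hji]) (by linarith [hx hji])

theorem pairRatio_succ_le_two_mul_gapRatio {k : Fin m} {j : Fin (m + 1)} (hj : j ≤ k.castSucc) :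
    pairRatio x k.succ j ≤ 2 * gapRatio x k := by
  have hj0 := h0.trans (hx.monotone (Fin.zero_le j))
  have hjk := hx.monotone hj
  have hk := hx k.castSucc_lt_succ
  rw [pairRatio, gapRatio, ← mul_div_assoc]
  exact div_le_div₀ (by linarith) (by linarith) (by linarith) (by linarith)

theorem abs_pairRatio_le {i j : Fin (m + 1)} (hij : i ≠ j) :
    |pairRatio x i j| ≤ 2 * ∑ k, gapRatio x k := by
  wlog hji : j < i generalizing i j
  · rw [← abs_neg, ← pairRatio_swap]
    exact this hij.symm (lt_of_le_of_ne (not_lt.1 hji) hij)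
  obtain ⟨k, rfl⟩ := Fin.exists_succ_eq.2 (Fin.ne_zero_of_lt hji)
  rw [abs_of_nonneg (pairRatio_nonneg h0 hx hji)]
  calc pairRatio x k.succ j ≤ 2 * gapRatio x k :=
        pairRatio_succ_le_two_mul_gapRatio h0 hx (Fin.le_castSucc_iff.2 hji)
    _ ≤ 2 * ∑ k, gapRatio x k := by
        gcongr
        exact single_le_sum (fun k _ => gapRatio_nonneg h0 hx k) (mem_univ k)

theorem abs_interaction_le (i : Fin (m + 1)) :
    |interaction x i| ≤ 2 * m * ∑ k, gapRatio x k := by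
  calc |interaction x i| ≤ ∑ j ∈ univ.erase i, |pairRatio x i j| := abs_sum_le_sum_abs _ _
    _ ≤ ∑ j ∈ univ.erase i, 2 * ∑ k, gapRatio x k :=
        sum_le_sum fun j hj => abs_pairRatio_le h0 hx (ne_of_mem_erase hj).symm
    _ = 2 * m * ∑ k, gapRatio x k := by
        rw [sum_const, card_erase_of_mem (mem_univ i), card_univ, Fintype.card_fin]
        simp only [nsmul_eq_mul, add_tsub_cancel_right]
        ring

-- The interactions among the particles above the gap cancel in pairs; what remains are the
-- nonnegative interactions across the gap, one of which dominates `gapRatio x k`.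
theorem gapRatio_le_sum_interaction (k : Fin m) :
    gapRatio x k ≤ ∑ i ∈ Ioi k.castSucc, interaction x i := by
  set S := Ioi k.castSucc
  have hcross : ∀ i ∈ S, ∀ j ∈ Sᶜ, 0 ≤ pairRatio x i j := fun i hi j hj =>
    pairRatio_nonneg h0 hx ((not_lt.1 (by simpa [S] using hj)).trans_lt (mem_Ioi.1 hi))
  have hsplit : ∑ i ∈ S, interaction x i = ∑ i ∈ S, ∑ j ∈ Sᶜ, pairRatio x i j := by
    simp_rw [interaction_eq_sum, ← sum_add_sum_compl S, sum_add_distrib,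
      sum_sum_eq_zero_of_antisymm S (pairRatio_swap x), zero_add]
  have hsucc : k.succ ∈ S := mem_Ioi.2 k.castSucc_lt_succ
  have hcast : k.castSucc ∈ Sᶜ := by simp [S]
  have hk := hx k.castSucc_lt_succ
  have hk0 := h0.trans (hx.monotone (Fin.zero_le k.castSucc))
  calc gapRatio x k ≤ pairRatio x k.succ k.castSucc :=
        div_le_div_of_nonneg_right (by linarith) (by linarith)
    _ ≤ ∑ j ∈ Sᶜ, pairRatio x k.succ j := single_le_sum (hcross _ hsucc) hcast
    _ ≤ ∑ i ∈ S, ∑ j ∈ Sᶜ, pairRatio x i j :=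
        single_le_sum (fun i hi => sum_nonneg (hcross i hi)) hsucc
    _ = _ := hsplit.symm

theorem abs_drift_le {C : ℝ} (hC : ∀ i, |x i| ≤ C) (α β γ : ℝ) (i : Fin (m + 1)) :
    |drift α β γ x i| ≤ (|α| + 2 * |γ| * C) + 2 * m * |β| * ∑ k, gapRatio x k := by
  have hI : |β * interaction x i| ≤ |β| * (2 * m * ∑ k, gapRatio x k) := by
    rw [abs_mul]; gcongr; exact abs_interaction_le h0 hx i
  linarith [abs_drift_sub_le hC α β γ i,
    abs_sub_abs_le_abs_sub (drift α β γ x i) (β * interaction x i)]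

theorem gapRatio_le_sum_abs_drift {C : ℝ} (hC : ∀ i, |x i| ≤ C) (α : ℝ) {β : ℝ} (hβ : 0 < β)
    (γ : ℝ) (k : Fin m) :
    gapRatio x k ≤ β⁻¹ * ((m + 1) * (|α| + 2 * |γ| * C)) + β⁻¹ * ∑ i, |drift α β γ x i| := by
  have hC0 : 0 ≤ |α| + 2 * |γ| * C := by
    have := (abs_nonneg (x 0)).trans (hC 0)
    positivity
  rw [← mul_add, le_inv_mul_iff₀ hβ]
  calc β * gapRatio x k ≤ ∑ i ∈ Ioi k.castSucc, β * interaction x i := by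
        rw [← mul_sum]; exact mul_le_mul_of_nonneg_left (gapRatio_le_sum_interaction h0 hx k) hβ.le
    _ ≤ ∑ i ∈ Ioi k.castSucc, ((|α| + 2 * |γ| * C) + |drift α β γ x i|) := by
        gcongr with i
        have := abs_drift_sub_le hC α β γ i
        linarith [le_abs_self (drift α β γ x i), neg_abs_le (drift α β γ x i - β * interaction x i)]
    _ ≤ ∑ i, ((|α| + 2 * |γ| * C) + |drift α β γ x i|) :=
        sum_le_sum_of_subset_of_nonneg (subset_univ _) fun i _ _ =>
          add_nonneg hC0 (abs_nonneg _)
    _ = _ := by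
        rw [sum_add_distrib, sum_const, card_univ, Fintype.card_fin, nsmul_eq_mul]
        push_cast; ring

end EigenvalueDrift

/-- Lemma 3.2 of the paper: for a continuous trajectory with ordered nonnegative
coordinates which are a.e. strictly ordered, integrability of the consecutive
interaction terms is equivalent to integrability of the full drift of the
eigenvalue SDE. -/
theorem stmt_0 (n : ℕ) (hn : 2 ≤ n) (α β γ : ℝ) (hβ : 0 < β)
    (f : ℝ → Fin n → ℝ)
    (hcont : ContinuousOn f (Set.Ici 0))
    (hstrict : ∀ᵐ t ∂(volume.restrict (Set.Ici (0:ℝ))),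
      0 ≤ f t ⟨0, by omega⟩ ∧ StrictMono (f t)) :
    ∀ t : ℝ, 0 ≤ t →
      ((∑ i : Fin (n-1),
          ∫⁻ s in Set.Ioc (0:ℝ) t,
            ENNReal.ofReal
              (f s ⟨i.1+1, by have := i.isLt; omega⟩ /
                (f s ⟨i.1+1, by have := i.isLt; omega⟩ -
                  f s ⟨i.1, by have := i.isLt; omega⟩))) < ⊤
        ↔
       (∑ i : Fin n,
          ∫⁻ s in Set.Ioc (0:ℝ) t,
            ENNReal.ofReal
              |α - 2*γ*(f s i) + β * ∑ j ∈ Finset.univ.erase i,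
                  (f s i + f s j) / (f s i - f s j)|) < ⊤) := by
  intro t _
  obtain ⟨m, rfl⟩ : ∃ m, n = m + 1 := ⟨n - 1, by omega⟩
  change (∑ k : Fin m, ∫⁻ s in Set.Ioc 0 t, ENNReal.ofReal (gapRatio (f s) k)) < ⊤ ↔
    (∑ i, ∫⁻ s in Set.Ioc 0 t, ENNReal.ofReal |drift α β γ (f s) i|) < ⊤
  have hIoc : Set.Ioc 0 t ⊆ Set.Ici (0 : ℝ) := fun _ hs => le_of_lt hs.1
  obtain ⟨C, hC⟩ := (isCompact_Icc (a := 0) (b := t)).exists_bound_of_continuousOn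
    (hcont.mono Set.Icc_subset_Ici_self)
  have hgood : ∀ᵐ s ∂volume.restrict (Set.Ioc 0 t),
      0 ≤ f s 0 ∧ StrictMono (f s) ∧ ∀ i, |f s i| ≤ C := by
    filter_upwards [ae_restrict_of_ae_restrict_of_subset hIoc hstrict,
      ae_restrict_mem measurableSet_Ioc] with s ⟨h0, hs⟩ hmem
    exact ⟨h0, hs, fun i => (norm_le_pi_norm (f s) i).trans (hC s (Set.Ioc_subset_Icc_self hmem))⟩
  have hf : AEMeasurable f (volume.restrict (Set.Ioc 0 t)) :=
    (hcont.mono hIoc).aemeasurable measurableSet_Ioc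
  refine ⟨fun h => ENNReal.sum_lt_top.2 fun i _ => ?_, fun h => ENNReal.sum_lt_top.2 fun k _ => ?_⟩
  · exact lintegral_ofReal_lt_top_of_ae_le_add_mul_sum (by positivity)
      (fun k _ => (measurable_gapRatio k).comp_aemeasurable hf)
      (hgood.mono fun s ⟨h0, hs, hCs⟩ => abs_drift_le h0 hs hCs α β γ i) h
  · exact lintegral_ofReal_lt_top_of_ae_le_add_mul_sum (inv_nonneg.2 hβ.le)
      (fun i _ => (measurable_drift α β γ i).abs.comp_aemeasurable hf)
      (hgood.mono fun s ⟨h0, hs, hCs⟩ => gapRatio_le_sum_abs_drift h0 hs hCs α hβ γ k) h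
end

section
/- Define sgn(x) = 1 if x > 0 and sgn(x) = −1 if x ≤ 0. Let a, b, ã, b̃ be real numbers with 0 ≤ a < b and 0 ≤ ã < b̃. Then ( (a+b)/(a−b) − (ã+b̃)/(ã−b̃) ) · ( sgn(a−ã) − sgn(b−b̃) ) ≤ 0. -/
/-!
On intervals `[a, b] ⊆ [0, ∞)` the quantity `(a + b) / (a - b) = 1 - 2b / (b - a)` grows when the
interval grows. The sign factor vanishes unless `a - ã` and `b - b̃` have opposite signs, i.e. unless
one of `[a, b]`, `[ã, b̃]` contains the other, and then its sign is opposite to that of the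
difference of the two quotients.
-/

lemma add_div_sub_antitone_left {a₁ a₂ b : ℝ} (hb : 0 ≤ b) (ha : a₁ ≤ a₂) (ha₂ : a₂ < b) :
    (a₂ + b) / (a₂ - b) ≤ (a₁ + b) / (a₁ - b) := by
  rw [← neg_div_neg_eq (a₂ + b), ← neg_div_neg_eq (a₁ + b),
    div_le_div_iff₀ (by linarith) (by linarith)]
  nlinarith

lemma add_div_sub_monotone_right {a b₁ b₂ : ℝ} (ha : 0 ≤ a) (hb₁ : a < b₁) (hb : b₁ ≤ b₂) :
    (a + b₁) / (a - b₁) ≤ (a + b₂) / (a - b₂) := by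
  rw [← neg_div_neg_eq (a + b₁), ← neg_div_neg_eq (a + b₂),
    div_le_div_iff₀ (by linarith) (by linarith)]
  nlinarith

lemma add_div_sub_le_of_Icc_subset {a₁ b₁ a₂ b₂ : ℝ} (ha₂ : 0 ≤ a₂) (ha : a₂ ≤ a₁)
    (hab₁ : a₁ < b₁) (hb : b₁ ≤ b₂) :
    (a₁ + b₁) / (a₁ - b₁) ≤ (a₂ + b₂) / (a₂ - b₂) :=
  calc (a₁ + b₁) / (a₁ - b₁) ≤ (a₂ + b₁) / (a₂ - b₁) :=
        add_div_sub_antitone_left (by linarith) ha hab₁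
    _ ≤ (a₂ + b₂) / (a₂ - b₂) := add_div_sub_monotone_right ha₂ (by linarith) hb

/-- Equation (3.3) of the paper: the sign inequality used in the proof of
pathwise uniqueness (Lemma 3.1) for the eigenvalue SDE. -/
theorem stmt_4 (a b a' b' : ℝ) (ha : 0 ≤ a) (hab : a < b)
    (ha' : 0 ≤ a') (hab' : a' < b')
    (sgn : ℝ → ℝ) (hsgn : ∀ x, sgn x = if 0 < x then 1 else -1) :
    ((a + b) / (a - b) - (a' + b') / (a' - b')) *
        (sgn (a - a') - sgn (b - b')) ≤ 0 := by
  simp only [hsgn, sub_pos]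
  split_ifs with h₁ h₂ h₂
  · simp
  · have := add_div_sub_le_of_Icc_subset ha' h₁.le hab (not_lt.mp h₂)
    nlinarith
  · have := add_div_sub_le_of_Icc_subset ha (not_lt.mp h₁) hab' h₂.le
    nlinarith
  · simp
end

section
/- Let n ≥ 2, 0 < β < 1, γ > 0 and α a real number with α − (n−1)β > 0, and let F(λ₁,…,λₙ) = ∏_{i=1}^n λ_i^{(α−(n−1)β)/2 − 1} e^{−γ λ_i} · ∏_{1≤i<j≤n} (λ_j − λ_i)^β. Then for all indices 1 ≤ j < i ≤ n, the integral ∫_{0 ≤ λ₁ ≤ … ≤ λₙ} ((λ_i + λ_j)/(λ_i − λ_j)) · F(λ₁,…,λₙ) dλ₁ … dλₙ is finite. -/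
/-!
On the chamber `0 ≤ λ₁ ≤ … ≤ λₙ` the factor `(λᵢ - λⱼ)^β` of `F` absorbs the pole of the drift term,
leaving the integrable singularity `(λᵢ - λⱼ)^(β-1)`. With `a = (α - (n-1)β)/2 > 0`, the factor
`(λᵢ + λⱼ) λᵢ^(a-1) ≤ 2 λᵢ^a` and all remaining Vandermonde factors are bounded by powers of
`1 + ∑ λₖ`, which half of the weight `exp (-γ ∑ λₖ)` absorbs. The integrand is thus dominated by
`(λᵢ - λⱼ)^(β-1) e^(-γ(λᵢ-λⱼ)/2) ∏_{k ≠ i} λₖ^(a-1) e^(-γλₖ/2)`; after the volume-preserving shear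
`λᵢ ↦ λᵢ - λⱼ` this is a product of one-dimensional Gamma densities, hence integrable.
-/

open MeasureTheory Finset Function Real Set
open scoped ENNReal Nat

section Shear
variable {ι G : Type*} [Fintype ι] [DecidableEq ι] [MeasurableSpace G] [AddGroup G]
  [MeasurableAdd G] [MeasurableSub₂ G] {μ : Measure G} [SigmaFinite μ] [μ.IsAddRightInvariant]

theorem measurePreserving_update_sub {i j : ι} (hij : i ≠ j) :
    MeasurePreserving (fun l : ι → G => update l i (l i - l j))
      (Measure.pi fun _ => μ) (Measure.pi fun _ => μ) := by
  have hmeas : Measurable (fun l : ι → G => update l i (l i - l j)) :=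
    measurable_update'.comp
      (measurable_id.prodMk ((measurable_pi_apply i).sub (measurable_pi_apply j)))
  refine ⟨hmeas, Measure.ext_of_lintegral _ fun ψ hψ => ?_⟩
  rw [lintegral_map hψ hmeas]
  refine lintegral_eq_of_lmarginal_eq {i} (hψ.comp hmeas) hψ ?_
  ext x
  simp only [lmarginal_singleton, update_self, update_idem, update_of_ne hij.symm]
  exact lintegral_sub_right_eq_self (fun t => ψ (update x i t)) (x j)

theorem MeasureTheory.Integrable.comp_sub_mul_prod_erase {f g : G → ℝ} (hf : Integrable f μ)
    (hg : Integrable g μ) {i j : ι} (hij : i ≠ j) :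
    Integrable (fun l : ι → G => f (l i - l j) * ∏ k ∈ univ.erase i, g (l k))
      (Measure.pi fun _ => μ) := by
  have hprod := Integrable.fintype_prod (f := fun k => if k = i then f else g) (μ := fun _ => μ)
    fun k => by split_ifs <;> assumption
  convert ((measurePreserving_update_sub hij).integrable_comp hprod.aestronglyMeasurable).2 hprod
    using 2 with l
  rw [Function.comp_apply, ← mul_prod_erase univ _ (mem_univ i)]
  congr 1
  · simp
  · refine prod_congr rfl fun k hk => ?_
    simp [ne_of_mem_erase hk]

end Shear

theorem exists_one_add_rpow_mul_exp_neg_le (p : ℝ) {c : ℝ} (hc : 0 < c) :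
    ∃ C, ∀ t, 0 ≤ t → (1 + t) ^ p * exp (-c * t) ≤ C := by
  set N := ⌈p⌉₊
  refine ⟨N ! * exp c / c ^ N, fun t ht => ?_⟩
  have hpow : (1 + t) ^ p ≤ (1 + t) ^ N := by
    rw [← rpow_natCast]
    exact rpow_le_rpow_of_exponent_le (by linarith) (Nat.le_ceil p)
  have hexp : (c * (1 + t)) ^ N / N ! ≤ exp (c * (1 + t)) :=
    pow_div_factorial_le_exp _ (by positivity) N
  calc (1 + t) ^ p * exp (-c * t) ≤ (1 + t) ^ N * exp (-c * t) := by gcongr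
    _ = (c * (1 + t)) ^ N / N ! * (N ! * exp (-c * t) / c ^ N) := by
        rw [mul_pow]; field_simp
    _ ≤ exp (c * (1 + t)) * (N ! * exp (-c * t) / c ^ N) := by gcongr
    _ = N ! * exp c / c ^ N := by
        rw [mul_div_assoc', mul_left_comm, ← exp_add]; ring_nf

noncomputable def gammaDensity (s c t : ℝ) : ℝ :=
  (Set.Ici 0).indicator (fun t => t ^ (s - 1) * exp (-c * t)) t

theorem gammaDensity_nonneg (s c t : ℝ) : 0 ≤ gammaDensity s c t :=
  indicator_nonneg (fun t (ht : 0 ≤ t) => by positivity) t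

theorem integrable_gammaDensity {s c : ℝ} (hs : 0 < s) (hc : 0 < c) :
    Integrable (gammaDensity s c) := by
  refine (integrable_indicator_iff measurableSet_Ici).2 ?_
  rw [integrableOn_Ici_iff_integrableOn_Ioi]
  simpa using integrableOn_rpow_mul_exp_neg_mul_rpow (p := 1) (by linarith : -1 < s - 1) one_pos hc

theorem add_mul_rpow_mul_exp_le {x y S : ℝ} (a : ℝ) {ε : ℝ} (ha : 0 ≤ a) (hε : 0 ≤ ε)
    (hy : 0 ≤ y) (hyx : y < x) (hxS : x ≤ S) :
    (x + y) * (x ^ (a - 1) * exp (-ε * x)) ≤ 2 * S ^ a * exp (-ε * (x - y)) := by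
  have hx : 0 < x := hy.trans_lt hyx
  have hS : 0 ≤ S := hx.le.trans hxS
  have hpow : (x + y) * x ^ (a - 1) ≤ 2 * x ^ a :=
    calc (x + y) * x ^ (a - 1) ≤ 2 * x * x ^ (a - 1) := by gcongr; linarith
      _ = 2 * x ^ a := by rw [rpow_sub_one hx.ne']; field_simp
  calc (x + y) * (x ^ (a - 1) * exp (-ε * x)) = (x + y) * x ^ (a - 1) * exp (-ε * x) :=
        (mul_assoc ..).symm
    _ ≤ 2 * x ^ a * exp (-ε * x) := mul_le_mul_of_nonneg_right hpow (exp_pos _).le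
    _ ≤ 2 * S ^ a * exp (-ε * (x - y)) :=
        mul_le_mul (by gcongr) (exp_le_exp.2 (by nlinarith)) (exp_pos _).le (by positivity)

theorem prod_sub_rpow_le_one_add_sum_rpow {ι : Type*} [Fintype ι] {l : ι → ℝ} (hl : ∀ k, 0 ≤ l k)
    {P : Finset (ι × ι)} (hP : ∀ p ∈ P, l p.1 ≤ l p.2) {β : ℝ} (hβ : 0 ≤ β) :
    ∏ p ∈ P, (l p.2 - l p.1) ^ β ≤ (1 + ∑ k, l k) ^ (β * #P) :=
  calc ∏ p ∈ P, (l p.2 - l p.1) ^ β ≤ ∏ p ∈ P, (1 + ∑ k, l k) ^ β :=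
        prod_le_prod (fun p hp => rpow_nonneg (sub_nonneg.2 (hP p hp)) β) fun p hp =>
          rpow_le_rpow (sub_nonneg.2 (hP p hp))
            (by linarith [hl p.1, single_le_sum (fun k _ => hl k) (mem_univ p.2)]) hβ
    _ = (1 + ∑ k, l k) ^ (β * #P) := by
        rw [prod_const, ← rpow_natCast,
          ← rpow_mul (add_nonneg zero_le_one (sum_nonneg fun k _ => hl k))]

section Density
variable {ι : Type*} [Fintype ι] [LinearOrder ι]

noncomputable def stationaryDensity (a β γ : ℝ) (l : ι → ℝ) : ℝ :=
  (∏ k, l k ^ (a - 1) * exp (-γ * l k)) *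
    ∏ p ∈ univ.filter (fun p : ι × ι => p.1 < p.2), (l p.2 - l p.1) ^ β

theorem stationaryDensity_eq_mul (a β γ : ℝ) (l : ι → ℝ) {i j : ι} (hji : j < i) :
    stationaryDensity a β γ l =
      (∏ k, l k ^ (a - 1) * exp (-(γ / 2) * l k)) * exp (-(γ / 2) * ∑ k, l k) *
        ((l i - l j) ^ β *
          ∏ p ∈ (univ.filter fun p : ι × ι => p.1 < p.2).erase (j, i), (l p.2 - l p.1) ^ β) := by
  have hsplit : ∀ k, l k ^ (a - 1) * exp (-γ * l k) =
      l k ^ (a - 1) * exp (-(γ / 2) * l k) * exp (-(γ / 2) * l k) := fun k => by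
    rw [mul_assoc, ← exp_add]; ring_nf
  have hji_mem : (j, i) ∈ univ.filter (fun p : ι × ι => p.1 < p.2) := by simpa using hji
  rw [stationaryDensity, prod_congr rfl fun k _ => hsplit k, prod_mul_distrib, ← exp_sum,
    ← mul_sum, ← mul_prod_erase _ _ hji_mem]

theorem exists_interaction_mul_stationaryDensity_le {a β γ : ℝ} (ha : 0 ≤ a) (hβ : 0 ≤ β)
    (hγ : 0 < γ) {i j : ι} (hji : j < i) :
    ∃ K, ∀ l : ι → ℝ, (∀ k, 0 ≤ l k) → Monotone l →
      (l i + l j) / (l i - l j) * stationaryDensity a β γ l ≤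
        K * (gammaDensity β (γ / 2) (l i - l j) *
          ∏ k ∈ univ.erase i, gammaDensity a (γ / 2) (l k)) := by
  set ε := γ / 2
  set P := (univ.filter (fun p : ι × ι => p.1 < p.2)).erase (j, i)
  obtain ⟨C, hC⟩ := exists_one_add_rpow_mul_exp_neg_le (a + β * #P) (half_pos hγ)
  have hC0 : 0 ≤ C := le_trans (by positivity) (hC 0 le_rfl)
  refine ⟨2 * C, fun l hl0 hmono => ?_⟩
  obtain heq | hlt := (hmono hji.le).eq_or_lt
  · rw [show l i - l j = 0 by rw [heq, sub_self], div_zero, zero_mul]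
    exact mul_nonneg (by positivity)
      (mul_nonneg (gammaDensity_nonneg ..) (prod_nonneg fun k _ => gammaDensity_nonneg ..))
  rw [stationaryDensity_eq_mul a β γ l hji, ← mul_prod_erase univ _ (mem_univ i)]
  set d := l i - l j
  have hd : 0 < d := sub_pos.2 hlt
  set S := ∑ k, l k
  have hS0 : 0 ≤ S := sum_nonneg fun k _ => hl0 k
  set B := fun k => l k ^ (a - 1) * exp (-ε * l k)
  have hB0 : ∀ k, 0 ≤ B k := fun k => by have := hl0 k; positivity
  set Q := ∏ k ∈ univ.erase i, B k
  have hQ0 : 0 ≤ Q := prod_nonneg fun k _ => hB0 k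
  have hP : ∀ p ∈ P, l p.1 ≤ l p.2 := fun p hp => hmono (mem_filter.1 (mem_of_mem_erase hp)).2.le
  set R := ∏ p ∈ P, (l p.2 - l p.1) ^ β
  have hR0 : 0 ≤ R := prod_nonneg fun p hp => rpow_nonneg (sub_nonneg.2 (hP p hp)) β
  have hBi : (l i + l j) * B i ≤ 2 * (1 + S) ^ a * exp (-ε * d) :=
    add_mul_rpow_mul_exp_le a ha (half_pos hγ).le (hl0 j) hlt
      (by linarith [single_le_sum (fun k _ => hl0 k) (mem_univ i)])
  calc (l i + l j) / d * (B i * Q * exp (-ε * S) * (d ^ β * R))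
      = d ^ (β - 1) * ((l i + l j) * B i) * Q * (R * exp (-ε * S)) := by
        rw [rpow_sub_one hd.ne']
        field_simp
    _ ≤ d ^ (β - 1) * (2 * (1 + S) ^ a * exp (-ε * d)) * Q *
          ((1 + S) ^ (β * #P) * exp (-ε * S)) := by
        gcongr
        exact prod_sub_rpow_le_one_add_sum_rpow hl0 hP hβ
    _ = 2 * ((1 + S) ^ (a + β * #P) * exp (-ε * S)) * (d ^ (β - 1) * exp (-ε * d) * Q) := by
        rw [rpow_add (by positivity)]
        ring
    _ ≤ 2 * C * (d ^ (β - 1) * exp (-ε * d) * Q) := by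
        gcongr
        exact hC S hS0
    _ = 2 * C * (gammaDensity β ε d * ∏ k ∈ univ.erase i, gammaDensity a ε (l k)) := by
        have hgd : gammaDensity β ε d = d ^ (β - 1) * exp (-ε * d) := indicator_of_mem hd.le _
        have hga : ∀ k, gammaDensity a ε (l k) = B k := fun k => indicator_of_mem (hl0 k) _
        rw [hgd, prod_congr rfl fun k _ => hga k]

theorem setLIntegral_interaction_mul_stationaryDensity_lt_top {a β γ : ℝ} (ha : 0 < a)
    (hβ : 0 < β) (hγ : 0 < γ) {i j : ι} (hji : j < i) :
    ∫⁻ l in {l : ι → ℝ | (∀ k, 0 ≤ l k) ∧ Monotone l},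
      ENNReal.ofReal ((l i + l j) / (l i - l j) * stationaryDensity a β γ l) < ⊤ := by
  obtain ⟨K, hK⟩ := exists_interaction_mul_stationaryDensity_le ha.le hβ.le hγ hji
  have hbound := ((integrable_gammaDensity hβ (half_pos hγ)).comp_sub_mul_prod_erase
    (integrable_gammaDensity ha (half_pos hγ)) hji.ne').const_mul K
  calc _ ≤ ∫⁻ l in {l : ι → ℝ | (∀ k, 0 ≤ l k) ∧ Monotone l}, ENNReal.ofReal
          (K * (gammaDensity β (γ / 2) (l i - l j) *
            ∏ k ∈ univ.erase i, gammaDensity a (γ / 2) (l k))) :=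
        setLIntegral_mono_ae hbound.aemeasurable.ennreal_ofReal.restrict
          (ae_of_all _ fun l hl => ENNReal.ofReal_le_ofReal (hK l hl.1 hl.2))
    _ ≤ _ := setLIntegral_le_lintegral _ _
    _ < ⊤ := hbound.lintegral_lt_top

end Density

/-- Drift-moment estimate for the stationary measure of the eigenvalue SDE
(proof of Proposition 2.6 of the paper): the singular interaction term
`(λ_i + λ_j)/(λ_i − λ_j)` is integrable against the stationary density. -/
theorem stmt_8 (n : ℕ) (hn : 2 ≤ n) (α β γ : ℝ) (hβ0 : 0 < β)
    (hγ : 0 < γ) (hαβ : 0 < α - ((n : ℝ) - 1) * β)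
    (F : (Fin n → ℝ) → ℝ)
    (hF : ∀ l : Fin n → ℝ, F l =
      (∏ i : Fin n,
          (l i) ^ ((α - ((n : ℝ) - 1) * β) / 2 - 1) * Real.exp (-γ * l i)) *
        ∏ p ∈ Finset.univ.filter (fun p : Fin n × Fin n => p.1 < p.2),
          (l p.2 - l p.1) ^ β)
    (i j : Fin n) (hji : j < i) :
    (∫⁻ l in {l : Fin n → ℝ | 0 ≤ l ⟨0, by omega⟩ ∧ Monotone l},
        ENNReal.ofReal ((l i + l j) / (l i - l j) * F l)) < ⊤ := by
  obtain rfl : F = stationaryDensity ((α - ((n : ℝ) - 1) * β) / 2) β γ := funext hF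
  refine lt_of_le_of_lt (lintegral_mono_set ?_)
    (setLIntegral_interaction_mul_stationaryDensity_lt_top (by linarith) hβ0 hγ hji)
  rintro l ⟨hl0, hmono⟩
  exact ⟨fun k => hl0.trans (hmono (Fin.mk_le_of_le_val k.val.zero_le)), hmono⟩
end
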